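/- Let R be a commutative ring with 1 and τ a refinable symmetric relation on R#. If a = λ a₁ ⋯ aₙ is a τ-complete factorization, then each aᵢ is τ-m-irreducible. -/

import Mathlib

variable {R : Type*} [CommRing R]

/-- A τ-factorization of `a`: `a = u * (a₁ ⋯ aₙ)` with `u` a unit, each factor a
nonunit, and distinct factors pairwise τ-related. -/
def IsTauFact (τ : R → R → Prop) (a : R) (l : List R) : Prop :=
  l ≠ [] ∧ (∀ b ∈ l, ¬ IsUnit b) ∧ l.Pairwise τ ∧ ∃ u : Rˣ, a = u * l.prod

/-- `l'` is obtained from `l` by replacing each entry by a τ-factorization of it. -/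
def IsRefinement (τ : R → R → Prop) (l l' : List R) : Prop :=
  ∃ L : List (List R), List.Forall₂ (IsTauFact τ) l L ∧ l' = L.flatten

/-- A τ-complete factorization: a τ-factorization admitting no strictly longer
τ-refinement which is itself a τ-factorization. -/
def IsTauComplete (τ : R → R → Prop) (a : R) (l : List R) : Prop :=
  IsTauFact τ a l ∧
    ∀ l', IsRefinement τ l l' → IsTauFact τ a l' → l'.length ≤ l.length

/-- τ is refinable: every τ-refinement of a τ-factorization is a τ-factorization. -/
def Refinable (τ : R → R → Prop) : Prop :=
  ∀ (a : R) (l l' : List R), IsTauFact τ a l → IsRefinement τ l l' → IsTauFact τ a l'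

/-- τ-unrefinably irreducible: a nonunit with only trivial τ-factorizations. -/
def UnrefIrred (τ : R → R → Prop) (a : R) : Prop :=
  ¬ IsUnit a ∧ ∀ l, IsTauFact τ a l → l.length = 1

/-!
Replacing one factor `b` of a τ-complete factorization `s ++ b :: t` by a τ-factorization `l'`
of `b`, and every other factor by itself, is a τ-refinement; by refinability it is again a
τ-factorization of `a`, so completeness forces `l'` to have length one, i.e. `l' = [c]` with
`b = u * c` for a unit `u`.
-/

section

variable {τ : R → R → Prop}

theorem IsTauFact.singleton {x : R} (hx : ¬ IsUnit x) : IsTauFact τ x [x] :=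
  ⟨List.cons_ne_nil _ _, by simpa using hx, List.pairwise_singleton _ _, ⟨1, by simp⟩⟩

theorem forall₂_isTauFact_map_singleton {s : List R} (hs : ∀ x ∈ s, ¬ IsUnit x) :
    List.Forall₂ (IsTauFact τ) s (s.map fun x => [x]) :=
  List.forall₂_map_right_iff.2 <| List.forall₂_same.2 fun x hx => IsTauFact.singleton (hs x hx)

theorem IsRefinement.append_cons {s t l' : List R} {b : R} (hs : ∀ x ∈ s, ¬ IsUnit x)
    (ht : ∀ x ∈ t, ¬ IsUnit x) (hb : IsTauFact τ b l') :
    IsRefinement τ (s ++ b :: t) (s ++ l' ++ t) :=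
  ⟨s.map (fun x => [x]) ++ l' :: t.map (fun x => [x]),
    List.rel_append (forall₂_isTauFact_map_singleton hs)
      (.cons hb (forall₂_isTauFact_map_singleton ht)),
    by simp [← List.flatMap_def]⟩

theorem IsTauComplete.unrefIrred_of_mem (href : Refinable τ) {a b : R} {l : List R}
    (hc : IsTauComplete τ a l) (hb : b ∈ l) : UnrefIrred τ b := by
  refine ⟨hc.1.2.1 b hb, fun l' hl' => ?_⟩
  obtain ⟨s, t, rfl⟩ := List.append_of_mem hb
  have hnonunit : ∀ x ∈ s ++ b :: t, ¬ IsUnit x := hc.1.2.1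
  have hrefine : IsRefinement τ (s ++ b :: t) (s ++ l' ++ t) :=
    .append_cons (fun x hx => hnonunit x (by simp [hx]))
      (fun x hx => hnonunit x (by simp [hx])) hl'
  have hlen := hc.2 _ hrefine (href a _ _ hc.1 hrefine)
  have hpos := List.length_pos_of_ne_nil hl'.1
  simp only [List.length_append, List.length_cons] at hlen
  omega

theorem UnrefIrred.span_singleton_eq {b c : R} {l : List R} (hb : UnrefIrred τ b)
    (hl : IsTauFact τ b l) (hc : c ∈ l) : Ideal.span {b} = Ideal.span {c} := by
  obtain ⟨c', rfl⟩ := List.length_eq_one_iff.mp (hb.2 l hl)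
  rw [List.mem_singleton] at hc
  subst hc
  obtain ⟨u, hu⟩ := hl.2.2.2
  rw [hu, List.prod_singleton]
  exact Ideal.span_singleton_mul_left_unit u.isUnit c

end

theorem stmt6_general (τ : R → R → Prop) (href : Refinable τ)
    (a : R) (l : List R) (hc : IsTauComplete τ a l) :
    ∀ b ∈ l, ∀ l', IsTauFact τ b l' →
      ∀ c ∈ l', Ideal.span {b} = Ideal.span {c} :=
  fun _ hb _ hl' _ hc' => (hc.unrefIrred_of_mem href hb).span_singleton_eq hl' hc'

theorem stmt6 (τ : R → R → Prop) (hsym : Symmetric τ) (href : Refinable τ)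
    (a : R) (l : List R) (hc : IsTauComplete τ a l) :
    ∀ b ∈ l, ∀ l', IsTauFact τ b l' →
      ∀ c ∈ l', Ideal.span {b} = Ideal.span {c} :=
  stmt6_general τ href a l hc
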